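/- arXiv:2301.11201 — 3 statements merged into one kernel-verified Lean document; each statement's English description precedes it below -/
import Mathlib

section
/- Let μ be feasible for the primal LP of the LAP. Then μ lies in the relative interior of the set of optimal solutions of the primal LP if and only if for all v ∈ V and ℓ ∈ L_v: μ_v(ℓ) > 0 if and only if the pair (v, ℓ) is minimally assignable. -/
open Finset

section LAPDefs

variable {V L : Type*} [Fintype V] [Fintype L] [DecidableEq V] [DecidableEq L]

/-- Feasibility for the primal LP of the LAP: `μ` is supported on allowed pairs,
nonnegative, each vertex's row sums to one and each label's column sums to one. -/
def PrimalFeasible (Lab : V → Finset L) (μ : V → L → ℝ) : Prop :=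
  (∀ v ℓ, ℓ ∈ Lab v → 0 ≤ μ v ℓ) ∧
  (∀ v ℓ, ℓ ∉ Lab v → μ v ℓ = 0) ∧
  (∀ v, ∑ ℓ ∈ Lab v, μ v ℓ = 1) ∧
  (∀ ℓ : L, ∑ v ∈ univ.filter (fun v => ℓ ∈ Lab v), μ v ℓ = 1)

/-- Objective of the primal LP of the LAP. -/
def primalObj (θ : V → L → ℝ) (Lab : V → Finset L) (μ : V → L → ℝ) : ℝ :=
  ∑ v, ∑ ℓ ∈ Lab v, θ v ℓ * μ v ℓ

/-- The set of optimal solutions of the primal LP of the LAP. -/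
def PrimalOpt (θ : V → L → ℝ) (Lab : V → Finset L) : Set (V → L → ℝ) :=
  {μ | PrimalFeasible Lab μ ∧
    ∀ ν, PrimalFeasible Lab ν → primalObj θ Lab μ ≤ primalObj θ Lab ν}

/-- Feasibility for the dual LP of the LAP: `α v + β ℓ ≤ θ v ℓ` on allowed pairs. -/
def DualFeasible (θ : V → L → ℝ) (Lab : V → Finset L) (p : (V → ℝ) × (L → ℝ)) : Prop :=
  ∀ v ℓ, ℓ ∈ Lab v → p.1 v + p.2 ℓ ≤ θ v ℓ

/-- Objective of the dual LP of the LAP. -/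
def dualObj (p : (V → ℝ) × (L → ℝ)) : ℝ := ∑ v, p.1 v + ∑ ℓ, p.2 ℓ

/-- The set of optimal solutions of the dual LP of the LAP. -/
def DualOpt (θ : V → L → ℝ) (Lab : V → Finset L) : Set ((V → ℝ) × (L → ℝ)) :=
  {p | DualFeasible θ Lab p ∧ ∀ q, DualFeasible θ Lab q → dualObj q ≤ dualObj p}

/-- A feasible assignment for the LAP: a bijection assigning allowed labels. -/
def FeasibleAssignment (Lab : V → Finset L) (x : V ≃ L) : Prop := ∀ v, x v ∈ Lab v

/-- Cost of an assignment. -/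
def assignCost (θ : V → L → ℝ) (x : V ≃ L) : ℝ := ∑ v, θ v (x v)

/-- An optimal assignment for the LAP: feasible and cost-minimizing. -/
def OptimalAssignment (θ : V → L → ℝ) (Lab : V → Finset L) (x : V ≃ L) : Prop :=
  FeasibleAssignment Lab x ∧
    ∀ y : V ≃ L, FeasibleAssignment Lab y → assignCost θ x ≤ assignCost θ y

/-- The pair `(v, ℓ)` is minimally assignable if some optimal assignment maps `v` to `ℓ`. -/
def MinimallyAssignable (θ : V → L → ℝ) (Lab : V → Finset L) (v : V) (ℓ : L) : Prop :=
  ∃ x : V ≃ L, OptimalAssignment θ Lab x ∧ x v = ℓ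

/-- Edges of the equality subgraph for a dual solution `(α, β)`. -/
def EqEdge (θ : V → L → ℝ) (Lab : V → Finset L) (α : V → ℝ) (β : L → ℝ)
    (v : V) (ℓ : L) : Prop :=
  ℓ ∈ Lab v ∧ α v + β ℓ = θ v ℓ

/-- `x` is a perfect matching in the bipartite graph with edges `E`. -/
def IsPerfectMatching (E : V → L → Prop) (x : V ≃ L) : Prop := ∀ v, E v (x v)

/-- The edge `{v, ℓ}` is perfectly matchable: some perfect matching uses it. -/
def PerfectlyMatchable (E : V → L → Prop) (v : V) (ℓ : L) : Prop :=
  ∃ x : V ≃ L, IsPerfectMatching E x ∧ x v = ℓ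

/-- The directed graph `F_x(E)` on `V` induced by a perfect matching `x` of `E`. -/
def Fdir (E : V → L → Prop) (x : V ≃ L) (u w : V) : Prop := u ≠ w ∧ E u (x w)

end LAPDefs

/-- The directed edge `(a, b)` lies on a directed cycle of the directed graph `F`:
there is a duplicate-free list `a :: b :: l` forming a directed path along `F`
whose last vertex has an edge back to `a`. -/
def EdgeOnDirectedCycle {α : Type*} (F : α → α → Prop) (a b : α) : Prop :=
  ∃ l : List α, (a :: b :: l).Nodup ∧ List.Chain F a (b :: l) ∧
    F ((b :: l).getLast (List.cons_ne_nil _ _)) a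

/-- `S` is a strongly connected component of the directed graph `F`: nonempty, any two of
its vertices are mutually reachable, and it is maximal with this property. -/
def IsSCC {α : Type*} (F : α → α → Prop) (S : Set α) : Prop :=
  S.Nonempty ∧ (∀ u ∈ S, ∀ w ∈ S, Relation.ReflTransGen F u w) ∧
  ∀ T : Set α, S ⊆ T → (∀ u ∈ T, ∀ w ∈ T, Relation.ReflTransGen F u w) → T = S


/-!
By the Birkhoff–von Neumann theorem every feasible `μ` is a convex combination of assignment
matrices of feasible assignments on which `μ` is positive. Hence the LP value is the optimal
assignment cost, every assignment in the decomposition of an optimal `μ` is optimal, and an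
optimal `μ` is positive only on minimally assignable pairs. Conversely, an assignment `x` using
only minimally assignable pairs is optimal: the average `ν` of optimal assignments witnessing
its pairs puts weight at least `1/|V|` on each pair of `x`, so one may step from `ν` a little
further away from `x` and stay feasible, which is only compatible with the optimality of `ν` if
`x` costs no more than the optimum. So the optimal face is the feasible set of the LP restricted
to the minimally assignable pairs, and the relative interior of such a polytope, every pair of
which is used by some feasible point, consists of its points that are positive on all pairs.
-/

section IntrinsicInterior

variable {E : Type*} [AddCommGroup E] [Module ℝ E] [TopologicalSpace E]

theorem exists_pos_add_smul_sub_mem_of_mem_intrinsicInterior [IsTopologicalAddGroup E]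
    [ContinuousSMul ℝ E] {s : Set E} {x y : E} (hx : x ∈ intrinsicInterior ℝ s) (hy : y ∈ s) :
    ∃ t : ℝ, 0 < t ∧ x + t • (x - y) ∈ s := by
  obtain ⟨z, hz, rfl⟩ := mem_intrinsicInterior.mp hx
  let g : ℝ → affineSpan ℝ s := fun t =>
    ⟨t • (z - y) + z, (affineSpan ℝ s).smul_vsub_vadd_mem t z.2 (subset_affineSpan ℝ s hy) z.2⟩
  have hg : Continuous g :=
    (by fun_prop : Continuous fun t : ℝ => t • ((z : E) - y) + z).subtype_mk _
  obtain ⟨t, ht, hts⟩ := Filter.Eventually.exists_gt <|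
    (hg.tendsto' 0 z (by simp [g])).eventually (isOpen_interior.mem_nhds hz)
  exact ⟨t, ht, by simpa [g, add_comm] using interior_subset hts⟩

theorem mem_intrinsicInterior_of_isOpen {s U : Set E} {x : E} (hU : IsOpen U) (hxU : x ∈ U)
    (hxs : x ∈ s) (hsU : (affineSpan ℝ s : Set E) ∩ U ⊆ s) : x ∈ intrinsicInterior ℝ s :=
  mem_intrinsicInterior.mpr ⟨⟨x, subset_affineSpan ℝ s hxs⟩,
    mem_interior.mpr ⟨Subtype.val ⁻¹' U, fun z hz => hsU ⟨z.2, hz⟩,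
      hU.preimage continuous_subtype_val, hxU⟩, rfl⟩

end IntrinsicInterior

section Objective

variable {V L : Type*} [Fintype V]

def primalObjₗ (θ : V → L → ℝ) (B : V → Finset L) : (V → L → ℝ) →ₗ[ℝ] ℝ where
  toFun := primalObj θ B
  map_add' μ ν := by simp only [primalObj, Pi.add_apply, mul_add, sum_add_distrib]
  map_smul' c μ := by
    simp only [primalObj, Pi.smul_apply, smul_eq_mul, mul_sum, RingHom.id_apply, mul_left_comm c]

theorem primalObj_sum_smul (θ : V → L → ℝ) (B : V → Finset L) {ι : Type*} (s : Finset ι)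
    (w : ι → ℝ) (f : ι → V → L → ℝ) :
    primalObj θ B (∑ i ∈ s, w i • f i) = ∑ i ∈ s, w i * primalObj θ B (f i) := by
  have h := map_sum (primalObjₗ θ B) (fun i => w i • f i) s
  simp only [map_smul, smul_eq_mul] at h
  exact h

theorem primalObj_add_smul_sub (θ : V → L → ℝ) (B : V → Finset L) (μ ν : V → L → ℝ) (t : ℝ) :
    primalObj θ B (μ + t • (μ - ν)) =
      primalObj θ B μ + t * (primalObj θ B μ - primalObj θ B ν) := by
  have h := map_add (primalObjₗ θ B) μ (t • (μ - ν))
  rw [map_smul, map_sub, smul_eq_mul] at h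
  exact h

theorem MinimallyAssignable.mem {θ : V → L → ℝ} {Lab : V → Finset L} {v : V} {ℓ : L}
    (h : MinimallyAssignable θ Lab v ℓ) : ℓ ∈ Lab v := by
  obtain ⟨x, hx, rfl⟩ := h
  exact hx.1 v

theorem exists_optimalAssignment [Fintype L] (θ : V → L → ℝ) {Lab : V → Finset L} {x : V ≃ L}
    (hx : FeasibleAssignment Lab x) : ∃ x₀, OptimalAssignment θ Lab x₀ := by
  classical
  obtain ⟨x₀, hx₀, hmin⟩ := exists_min_image (univ.filter (FeasibleAssignment Lab))
    (assignCost θ) ⟨x, mem_filter.mpr ⟨mem_univ x, hx⟩⟩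
  exact ⟨x₀, (mem_filter.mp hx₀).2, fun y hy => hmin y (mem_filter.mpr ⟨mem_univ y, hy⟩)⟩

open Classical in
noncomputable def minimallyAssignableLabels (θ : V → L → ℝ) (Lab : V → Finset L) (v : V) :
    Finset L :=
  (Lab v).filter (MinimallyAssignable θ Lab v)

theorem mem_minimallyAssignableLabels {θ : V → L → ℝ} {Lab : V → Finset L} {v : V} {ℓ : L} :
    ℓ ∈ minimallyAssignableLabels θ Lab v ↔ MinimallyAssignable θ Lab v ℓ := by
  simp only [minimallyAssignableLabels, mem_filter, and_iff_right_iff_imp]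
  exact MinimallyAssignable.mem

theorem minimallyAssignableLabels_subset (θ : V → L → ℝ) (Lab : V → Finset L) (v : V) :
    minimallyAssignableLabels θ Lab v ⊆ Lab v :=
  fun _ hℓ => (mem_minimallyAssignableLabels.mp hℓ).mem

end Objective

section Assignments

variable {V L : Type*} [DecidableEq L]

def assignmentMatrix (x : V ≃ L) : V → L → ℝ := fun v ℓ => if x v = ℓ then 1 else 0

theorem assignmentMatrix_nonneg (x : V ≃ L) : 0 ≤ assignmentMatrix x := fun v ℓ => by
  unfold assignmentMatrix; split_ifs <;> norm_num

theorem primalObj_assignmentMatrix [Fintype V] (θ : V → L → ℝ) {B : V → Finset L} {x : V ≃ L}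
    (hx : FeasibleAssignment B x) : primalObj θ B (assignmentMatrix x) = assignCost θ x := by
  simp [primalObj, assignCost, assignmentMatrix, hx _]

structure IsAssignmentDecomposition (B : V → Finset L) (μ : V → L → ℝ) (s : Finset (V ≃ L))
    (w : (V ≃ L) → ℝ) : Prop where
  pos : ∀ x ∈ s, 0 < w x
  feasible : ∀ x ∈ s, FeasibleAssignment B x
  sum_weight : ∑ x ∈ s, w x = 1
  sum_smul : ∑ x ∈ s, w x • assignmentMatrix x = μ

namespace IsAssignmentDecomposition

variable {B : V → Finset L} {μ : V → L → ℝ} {s : Finset (V ≃ L)} {w : (V ≃ L) → ℝ}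

theorem mono (d : IsAssignmentDecomposition B μ s w) {B' : V → Finset L}
    (hBB' : ∀ v, B v ⊆ B' v) : IsAssignmentDecomposition B' μ s w :=
  ⟨d.pos, fun x hx v => hBB' v (d.feasible x hx v), d.sum_weight, d.sum_smul⟩

theorem exists_mem_apply_eq (d : IsAssignmentDecomposition B μ s w) {v : V} {ℓ : L}
    (hpos : 0 < μ v ℓ) : ∃ x ∈ s, x v = ℓ := by
  rw [← d.sum_smul] at hpos
  obtain ⟨x, hx, hne⟩ := exists_ne_zero_of_sum_ne_zero (by simpa using hpos.ne')
  by_contra! h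
  simp [assignmentMatrix, h x hx] at hne

theorem sum_mul_assignCost_sub [Fintype V] (d : IsAssignmentDecomposition B μ s w)
    (θ : V → L → ℝ) (c : ℝ) : ∑ x ∈ s, w x * (assignCost θ x - c) = primalObj θ B μ - c := by
  rw [← d.sum_smul, primalObj_sum_smul]
  simp only [mul_sub, sum_sub_distrib, ← sum_mul, d.sum_weight, one_mul]
  congr 1
  exact sum_congr rfl fun x hx => by rw [primalObj_assignmentMatrix θ (d.feasible x hx)]

end IsAssignmentDecomposition

end Assignments

section Feasibility

variable {V L : Type*} [Fintype V] [Fintype L] [DecidableEq L]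

theorem primalFeasible_iff {B : V → Finset L} {μ : V → L → ℝ} :
    PrimalFeasible B μ ↔ (∀ v ℓ, 0 ≤ μ v ℓ) ∧ (∀ v ℓ, ℓ ∉ B v → μ v ℓ = 0) ∧
      (∀ v, ∑ ℓ, μ v ℓ = 1) ∧ (∀ ℓ, ∑ v, μ v ℓ = 1) := by
  suffices h : (∀ v ℓ, ℓ ∉ B v → μ v ℓ = 0) → (∀ v, ∑ ℓ ∈ B v, μ v ℓ = ∑ ℓ, μ v ℓ) ∧
      ∀ ℓ, ∑ v ∈ univ.filter (fun v => ℓ ∈ B v), μ v ℓ = ∑ v, μ v ℓ by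
    constructor
    · rintro ⟨hnn, hzero, hrow, hcol⟩
      refine ⟨fun v ℓ => ?_, hzero, fun v => (h hzero).1 v ▸ hrow v,
        fun ℓ => (h hzero).2 ℓ ▸ hcol ℓ⟩
      by_cases hℓ : ℓ ∈ B v
      exacts [hnn v ℓ hℓ, (hzero v ℓ hℓ).ge]
    · rintro ⟨hnn, hzero, hrow, hcol⟩
      exact ⟨fun v ℓ _ => hnn v ℓ, hzero, fun v => (h hzero).1 v ▸ hrow v,
        fun ℓ => (h hzero).2 ℓ ▸ hcol ℓ⟩
  intro hzero
  exact ⟨fun v => sum_subset (subset_univ _) fun ℓ _ hℓ => hzero v ℓ hℓ,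
    fun ℓ => sum_filter_of_ne fun v _ h => by_contra fun hℓ => h (hzero v ℓ hℓ)⟩

theorem PrimalFeasible.mono {B B' : V → Finset L} {μ : V → L → ℝ} (h : PrimalFeasible B μ)
    (hBB' : ∀ v, B v ⊆ B' v) : PrimalFeasible B' μ := by
  obtain ⟨hnn, hzero, hrow, hcol⟩ := primalFeasible_iff.mp h
  exact primalFeasible_iff.mpr ⟨hnn, fun v ℓ hℓ => hzero v ℓ fun h => hℓ (hBB' v h), hrow, hcol⟩

theorem PrimalFeasible.restrict {B B' : V → Finset L} {μ : V → L → ℝ} (h : PrimalFeasible B' μ)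
    (hzero : ∀ v ℓ, ℓ ∉ B v → μ v ℓ = 0) : PrimalFeasible B μ := by
  obtain ⟨hnn, -, hrow, hcol⟩ := primalFeasible_iff.mp h
  exact primalFeasible_iff.mpr ⟨hnn, hzero, hrow, hcol⟩

theorem PrimalFeasible.card_eq {B : V → Finset L} {μ : V → L → ℝ} (h : PrimalFeasible B μ) :
    Fintype.card V = Fintype.card L := by
  obtain ⟨-, -, hrow, hcol⟩ := primalFeasible_iff.mp h
  have : (Fintype.card V : ℝ) = Fintype.card L := by
    calc (Fintype.card V : ℝ) = ∑ v, ∑ ℓ, μ v ℓ := by simp [hrow]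
      _ = ∑ ℓ, ∑ v, μ v ℓ := sum_comm
      _ = Fintype.card L := by simp [hcol]
  exact_mod_cast this

theorem primalFeasible_assignmentMatrix {B : V → Finset L} {x : V ≃ L}
    (hx : FeasibleAssignment B x) : PrimalFeasible B (assignmentMatrix x) := by
  refine primalFeasible_iff.mpr ⟨assignmentMatrix_nonneg x, fun v ℓ hℓ => ?_, fun v => ?_,
    fun ℓ => ?_⟩
  · have : x v ≠ ℓ := fun h => hℓ (h ▸ hx v)
    simp [assignmentMatrix, this]
  · simp [assignmentMatrix]
  · rw [Fintype.sum_eq_single (x.symm ℓ) fun v hv => ?_]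
    · simp [assignmentMatrix]
    · simp [assignmentMatrix, ← x.eq_symm_apply, hv]

theorem PrimalFeasible.primalFeasible_and_pos_iff {B Lab : V → Finset L} {μ : V → L → ℝ}
    (hμ : PrimalFeasible Lab μ) (hsub : ∀ v, B v ⊆ Lab v) :
    (PrimalFeasible B μ ∧ ∀ v ℓ, ℓ ∈ B v → 0 < μ v ℓ) ↔
      ∀ v ℓ, ℓ ∈ Lab v → (0 < μ v ℓ ↔ ℓ ∈ B v) := by
  constructor
  · rintro ⟨hμB, hpos⟩ v ℓ -
    exact ⟨fun h => by_contra fun hn => h.ne' (hμB.2.1 v ℓ hn), hpos v ℓ⟩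
  · intro h
    refine ⟨hμ.restrict fun v ℓ hn => ?_, fun v ℓ hℓ => (h v ℓ (hsub v hℓ)).mpr hℓ⟩
    by_cases hℓ : ℓ ∈ Lab v
    · exact le_antisymm (not_lt.mp fun hp => hn ((h v ℓ hℓ).mp hp))
        ((primalFeasible_iff.mp hμ).1 v ℓ)
    · exact hμ.2.1 v ℓ hℓ

def primalConstraints (B : V → Finset L) : AffineSubspace ℝ (V → L → ℝ) where
  carrier := {μ | (∀ v ℓ, ℓ ∉ B v → μ v ℓ = 0) ∧ (∀ v, ∑ ℓ, μ v ℓ = 1) ∧ (∀ ℓ, ∑ v, μ v ℓ = 1)}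
  smul_vsub_vadd_mem' c μ₁ μ₂ μ₃ := by
    rintro ⟨hz₁, hr₁, hc₁⟩ ⟨hz₂, hr₂, hc₂⟩ ⟨hz₃, hr₃, hc₃⟩
    simp only [Set.mem_ofPred_eq, vsub_eq_sub, vadd_eq_add, Pi.add_apply, Pi.smul_apply,
      Pi.sub_apply, smul_eq_mul, sum_add_distrib, ← mul_sum, sum_sub_distrib, *]
    exact ⟨fun v ℓ hℓ => by simp [hz₁ v ℓ hℓ, hz₂ v ℓ hℓ, hz₃ v ℓ hℓ], by simp, by simp⟩

theorem primalFeasible_iff_mem_primalConstraints {B : V → Finset L} {μ : V → L → ℝ} :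
    PrimalFeasible B μ ↔ μ ∈ primalConstraints B ∧ 0 ≤ μ := by
  simp only [primalFeasible_iff, Pi.le_def, Pi.zero_apply]
  exact ⟨fun ⟨h0, h⟩ => ⟨h, h0⟩, fun ⟨h, h0⟩ => ⟨h0, h⟩⟩

theorem convex_setOf_primalFeasible (B : V → Finset L) :
    Convex ℝ {μ : V → L → ℝ | PrimalFeasible B μ} := by
  simp only [primalFeasible_iff_mem_primalConstraints, Set.ofPred_and]
  exact (primalConstraints B).convex.inter (convex_Ici 0)

theorem PrimalFeasible.add_smul_sub {B : V → Finset L} {μ ν : V → L → ℝ}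
    (hμ : PrimalFeasible B μ) (hν : PrimalFeasible B ν) (t : ℝ)
    (hnn : 0 ≤ μ + t • (μ - ν)) : PrimalFeasible B (μ + t • (μ - ν)) := by
  rw [primalFeasible_iff_mem_primalConstraints] at *
  refine ⟨?_, hnn⟩
  simpa [add_comm] using (primalConstraints B).smul_vsub_vadd_mem t hμ.1 hν.1 hμ.1

theorem mem_intrinsicInterior_setOf_primalFeasible_iff {B : V → Finset L}
    (hB : ∀ v ℓ, ℓ ∈ B v → ∃ ν, PrimalFeasible B ν ∧ 0 < ν v ℓ) {μ : V → L → ℝ} :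
    μ ∈ intrinsicInterior ℝ {μ | PrimalFeasible B μ} ↔
      PrimalFeasible B μ ∧ ∀ v ℓ, ℓ ∈ B v → 0 < μ v ℓ := by
  constructor
  · intro hμ
    have hμB : μ ∈ {μ | PrimalFeasible B μ} := intrinsicInterior_subset hμ
    refine ⟨hμB, fun v ℓ hℓ => ?_⟩
    obtain ⟨ν, hν, hνpos⟩ := hB v ℓ hℓ
    obtain ⟨t, ht, hts⟩ := exists_pos_add_smul_sub_mem_of_mem_intrinsicInterior hμ hν
    have h₁ := (primalFeasible_iff.mp hts).1 v ℓ
    have h₂ := (primalFeasible_iff.mp hμB).1 v ℓ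
    simp only [Pi.add_apply, Pi.smul_apply, Pi.sub_apply, smul_eq_mul] at h₁
    nlinarith
  · rintro ⟨hμB, hpos⟩
    refine mem_intrinsicInterior_of_isOpen
      (U := {ν : V → L → ℝ | ∀ v ℓ, ℓ ∈ B v → 0 < ν v ℓ}) ?_ hpos hμB ?_
    · simp only [Set.ofPred_forall]
      exact isOpen_iInter_of_finite fun v => isOpen_iInter_of_finite fun ℓ =>
        isOpen_iInter_of_finite fun _ => isOpen_lt continuous_const (by fun_prop)
    · rintro ν ⟨hνA, hνU⟩
      have hνC : ν ∈ primalConstraints B := affineSpan_le.mpr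
        (fun _ h => (primalFeasible_iff_mem_primalConstraints.mp h).1) hνA
      refine primalFeasible_iff_mem_primalConstraints.mpr ⟨hνC, fun v ℓ => ?_⟩
      by_cases hℓ : ℓ ∈ B v
      exacts [(hνU v ℓ hℓ).le, (hνC.1 v ℓ hℓ).ge]

theorem primalObj_le_assignCost_of_mem_primalOpt {θ : V → L → ℝ} {Lab : V → Finset L}
    {μ : V → L → ℝ} (hμ : μ ∈ PrimalOpt θ Lab) {x : V ≃ L} (hx : FeasibleAssignment Lab x) :
    primalObj θ Lab μ ≤ assignCost θ x :=
  primalObj_assignmentMatrix θ hx ▸ hμ.2 _ (primalFeasible_assignmentMatrix hx)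

end Feasibility

section OptimalFace

variable {V L : Type*} [Fintype V] [Fintype L] [DecidableEq V] [DecidableEq L]

theorem PrimalFeasible.exists_eq_sum_smul_assignmentMatrix {B : V → Finset L} {μ : V → L → ℝ}
    (h : PrimalFeasible B μ) :
    ∃ w : (V ≃ L) → ℝ, (∀ x, 0 ≤ w x) ∧ ∑ x, w x = 1 ∧ ∑ x, w x • assignmentMatrix x = μ := by
  obtain ⟨hnn, -, hrow, hcol⟩ := primalFeasible_iff.mp h
  let e : V ≃ L := Fintype.equivOfCardEq h.card_eq
  have hM : Matrix.of (fun v u => μ v (e u)) ∈ doublyStochastic ℝ V :=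
    mem_doublyStochastic_iff_sum.mpr ⟨fun v u => hnn _ _,
      fun v => (e.sum_comp (μ v)).trans (hrow v), fun u => hcol (e u)⟩
  obtain ⟨w, hw0, hw1, hwM⟩ := exists_eq_sum_perm_of_mem_doublyStochastic hM
  let toAssignment : Equiv.Perm V ≃ (V ≃ L) := (Equiv.refl V).equivCongr e
  refine ⟨fun x => w (toAssignment.symm x), fun x => hw0 _,
    (toAssignment.symm.sum_comp w).trans hw1, funext fun v => funext fun ℓ => ?_⟩
  rw [← toAssignment.sum_comp]
  simpa [assignmentMatrix, toAssignment, Equiv.Perm.permMatrix, Matrix.sum_apply,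
    PEquiv.toMatrix_apply, Equiv.trans_assoc, ← Equiv.eq_symm_apply] using
    congrFun (congrFun hwM v) (e.symm ℓ)

theorem PrimalFeasible.exists_isAssignmentDecomposition {B : V → Finset L} {μ : V → L → ℝ}
    (h : PrimalFeasible B μ) : ∃ s w, IsAssignmentDecomposition B μ s w := by
  obtain ⟨w, hw0, hw1, hμ⟩ := h.exists_eq_sum_smul_assignmentMatrix
  have hpos {x : V ≃ L} (hx : w x ≠ 0) : 0 < w x := (hw0 x).lt_of_ne' hx
  refine ⟨univ.filter (0 < w ·), w, fun x hx => (mem_filter.mp hx).2, fun x hx v => ?_,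
    by rwa [sum_filter_of_ne fun x _ => hpos],
    by rwa [sum_filter_of_ne fun x _ hx => hpos (left_ne_zero_of_smul hx)]⟩
  by_contra hv
  have hle : w x ≤ μ v (x v) := by
    calc w x = (w x • assignmentMatrix x) v (x v) := by simp [assignmentMatrix]
      _ ≤ ∑ y, (w y • assignmentMatrix y) v (x v) :=
          single_le_sum (f := fun y => (w y • assignmentMatrix y) v (x v))
            (fun y _ => mul_nonneg (hw0 y) (assignmentMatrix_nonneg y v (x v))) (mem_univ x)
      _ = μ v (x v) := by rw [← hμ, Finset.sum_apply, Finset.sum_apply]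
  exact (mem_filter.mp hx).2.not_ge (hle.trans_eq (h.2.1 v (x v) hv))

theorem assignCost_le_primalObj (θ : V → L → ℝ) {Lab : V → Finset L} {x₀ : V ≃ L}
    (hx₀ : OptimalAssignment θ Lab x₀) {μ : V → L → ℝ} (hμ : PrimalFeasible Lab μ) :
    assignCost θ x₀ ≤ primalObj θ Lab μ := by
  obtain ⟨s, w, d⟩ := hμ.exists_isAssignmentDecomposition
  rw [← sub_nonneg, ← d.sum_mul_assignCost_sub]
  exact sum_nonneg fun x hx =>
    mul_nonneg (d.pos x hx).le (sub_nonneg.mpr (hx₀.2 x (d.feasible x hx)))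

theorem minimallyAssignable_of_mem_primalOpt {θ : V → L → ℝ} {Lab : V → Finset L}
    {x₀ : V ≃ L} (hx₀ : OptimalAssignment θ Lab x₀) {μ : V → L → ℝ}
    (hμ : μ ∈ PrimalOpt θ Lab) {v : V} {ℓ : L} (hpos : 0 < μ v ℓ) :
    MinimallyAssignable θ Lab v ℓ := by
  obtain ⟨s, w, d⟩ := hμ.1.exists_isAssignmentDecomposition
  obtain ⟨x, hx, rfl⟩ := d.exists_mem_apply_eq hpos
  have hexcess (y) (hy : y ∈ s) : 0 ≤ w y * (assignCost θ y - assignCost θ x₀) :=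
    mul_nonneg (d.pos y hy).le (sub_nonneg.mpr (hx₀.2 y (d.feasible y hy)))
  have hzero : ∑ y ∈ s, w y * (assignCost θ y - assignCost θ x₀) = 0 := by
    refine le_antisymm ?_ (sum_nonneg hexcess)
    rw [d.sum_mul_assignCost_sub, sub_nonpos]
    exact primalObj_le_assignCost_of_mem_primalOpt hμ hx₀.1
  have hcost : assignCost θ x = assignCost θ x₀ := sub_eq_zero.mp <|
    (mul_eq_zero.mp ((sum_eq_zero_iff_of_nonneg hexcess).mp hzero x hx)).resolve_left
      (d.pos x hx).ne'
  exact ⟨x, ⟨d.feasible x hx, fun y hy => hcost ▸ hx₀.2 y hy⟩, rfl⟩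

theorem OptimalAssignment.of_forall_minimallyAssignable {θ : V → L → ℝ} {Lab : V → Finset L}
    {x₀ x : V ≃ L} (hx₀ : OptimalAssignment θ Lab x₀)
    (hx : ∀ v, MinimallyAssignable θ Lab v (x v)) : OptimalAssignment θ Lab x := by
  choose y hy hyx using hx
  have hxLab : FeasibleAssignment Lab x := fun v => hyx v ▸ (hy v).1 v
  refine ⟨hxLab, fun z hz => ?_⟩
  rcases isEmpty_or_nonempty V with hV | hV
  · simp [assignCost]
  set t : ℝ := (Fintype.card V : ℝ)⁻¹
  have ht : 0 < t := by positivity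
  set ν := ∑ u, t • assignmentMatrix (y u)
  have hν : PrimalFeasible Lab ν := (convex_setOf_primalFeasible Lab).sum_mem
    (fun _ _ => ht.le) (by simp [t]) fun u _ => primalFeasible_assignmentMatrix (hy u).1
  have hνobj : primalObj θ Lab ν = assignCost θ x₀ := by
    simp only [ν, primalObj_sum_smul, primalObj_assignmentMatrix θ (hy _).1,
      fun u => le_antisymm ((hy u).2 x₀ hx₀.1) (hx₀.2 _ (hy u).1)]
    simp [t]
  have hdom (v : V) (ℓ : L) : t * assignmentMatrix x v ℓ ≤ ν v ℓ := by
    calc t * assignmentMatrix x v ℓ = t * assignmentMatrix (y v) v ℓ := by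
          simp [assignmentMatrix, hyx v]
      _ ≤ ∑ u, t * assignmentMatrix (y u) v ℓ :=
          single_le_sum (f := fun u => t * assignmentMatrix (y u) v ℓ)
            (fun u _ => mul_nonneg ht.le (assignmentMatrix_nonneg _ v ℓ)) (mem_univ v)
      _ = ν v ℓ := by simp [ν, Finset.sum_apply]
  have hstep := hν.add_smul_sub (primalFeasible_assignmentMatrix hxLab) t fun v ℓ => by
    have := (primalFeasible_iff.mp hν).1 v ℓ
    simp only [Pi.zero_apply, Pi.add_apply, Pi.smul_apply, Pi.sub_apply, smul_eq_mul]
    nlinarith [hdom v ℓ]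
  have hlb := assignCost_le_primalObj θ hx₀ hstep
  rw [primalObj_add_smul_sub, hνobj, primalObj_assignmentMatrix θ hxLab] at hlb
  have : assignCost θ x ≤ assignCost θ x₀ := by nlinarith
  exact this.trans (hx₀.2 z hz)

theorem primalOpt_eq_setOf_primalFeasible {θ : V → L → ℝ} {Lab : V → Finset L} {x₀ : V ≃ L}
    (hx₀ : OptimalAssignment θ Lab x₀) :
    PrimalOpt θ Lab = {μ | PrimalFeasible (minimallyAssignableLabels θ Lab) μ} := by
  ext μ
  refine ⟨fun hμ => hμ.1.restrict fun v ℓ hℓ => ?_, fun hμ => ?_⟩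
  · by_contra hne
    exact hℓ (mem_minimallyAssignableLabels.mpr <| minimallyAssignable_of_mem_primalOpt hx₀ hμ <|
      ((primalFeasible_iff.mp hμ.1).1 v ℓ).lt_of_ne' hne)
  · obtain ⟨s, w, d⟩ := hμ.exists_isAssignmentDecomposition
    have hopt (x) (hx : x ∈ s) : assignCost θ x = assignCost θ x₀ :=
      have hxopt := hx₀.of_forall_minimallyAssignable fun v =>
        mem_minimallyAssignableLabels.mp (d.feasible x hx v)
      le_antisymm (hxopt.2 x₀ hx₀.1) (hx₀.2 x hxopt.1)
    have hobj : primalObj θ Lab μ = assignCost θ x₀ := by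
      rw [← sub_eq_zero, ← (d.mono (minimallyAssignableLabels_subset θ Lab)).sum_mul_assignCost_sub]
      exact sum_eq_zero fun x hx => by rw [hopt x hx, sub_self, mul_zero]
    exact ⟨hμ.mono (minimallyAssignableLabels_subset θ Lab),
      fun ν hν => hobj ▸ assignCost_le_primalObj θ hx₀ hν⟩

end OptimalFace

theorem statement1_general {V L : Type*} [Fintype V] [Fintype L] [DecidableEq V] [DecidableEq L]
    (θ : V → L → ℝ) (Lab : V → Finset L)
    (μ : V → L → ℝ) (hμ : PrimalFeasible Lab μ) :
    μ ∈ intrinsicInterior ℝ (PrimalOpt θ Lab) ↔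
      ∀ v ℓ, ℓ ∈ Lab v → (0 < μ v ℓ ↔ MinimallyAssignable θ Lab v ℓ) := by
  obtain ⟨s, w, d⟩ := hμ.exists_isAssignmentDecomposition
  obtain ⟨x, hx⟩ := nonempty_of_sum_ne_zero (d.sum_weight ▸ one_ne_zero)
  obtain ⟨x₀, hx₀⟩ := exists_optimalAssignment θ (d.feasible x hx)
  have hwitness (v : V) (ℓ : L) (hℓ : ℓ ∈ minimallyAssignableLabels θ Lab v) :
      ∃ ν, PrimalFeasible (minimallyAssignableLabels θ Lab) ν ∧ 0 < ν v ℓ := by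
    obtain ⟨y, hy, rfl⟩ := mem_minimallyAssignableLabels.mp hℓ
    exact ⟨assignmentMatrix y, primalFeasible_assignmentMatrix fun u =>
      mem_minimallyAssignableLabels.mpr ⟨y, hy, rfl⟩, by simp [assignmentMatrix]⟩
  rw [primalOpt_eq_setOf_primalFeasible hx₀, mem_intrinsicInterior_setOf_primalFeasible_iff hwitness,
    hμ.primalFeasible_and_pos_iff (minimallyAssignableLabels_subset θ Lab)]
  simp only [mem_minimallyAssignableLabels]

/-- Proposition 1: a primal-feasible `μ` lies in the relative interior of the primal
optimal set iff `μ v ℓ > 0` exactly on minimally-assignable pairs. -/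
theorem statement1 {V L : Type*} [Fintype V] [Fintype L] [DecidableEq V] [DecidableEq L]
    (θ : V → L → ℝ) (Lab : V → Finset L)
    (hfeas : ∃ x : V ≃ L, FeasibleAssignment Lab x)
    (μ : V → L → ℝ) (hμ : PrimalFeasible Lab μ) :
    μ ∈ intrinsicInterior ℝ (PrimalOpt θ Lab) ↔
      ∀ v ℓ, ℓ ∈ Lab v → (0 < μ v ℓ ↔ MinimallyAssignable θ Lab v ℓ) :=
  statement1_general θ Lab μ hμ
end

section
/- Let (α, β) be feasible for the dual LP of the LAP. Then (α, β) lies in the relative interior of the set of optimal solutions of the dual LP if and only if the equality subgraph (V ∪ L, E(α,β)) has a perfect matching and every edge of the equality subgraph is perfectly matchable in it. -/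
open Finset

/-!
Raising `α` by `ε` on a set `S ⊆ V` and lowering `β` by `ε` on the neighbourhood `T` of `S` in
the equality subgraph keeps `(α, β)` feasible for small `ε > 0` and changes the objective by
`ε (|S| - |T|)`. Hence the equality subgraph of an optimal solution satisfies Hall's condition,
so it has a perfect matching. If its edge `{v, ℓ}` is not perfectly matchable, Hall's condition
fails for the graph with `v` and `ℓ` removed, at some `S ∌ v`; then `|T| = |S|` and `ℓ ∈ T`, and the
shift is another optimal solution that is slack at `{v, ℓ}`. A linear inequality valid on a set
and tight at a point of its relative interior is tight on the whole set, so such an edge rules out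
the relative interior.

Conversely, if every edge of the equality subgraph lies in a perfect matching, complementary
slackness makes it tight at every optimal solution, hence on the affine span of the optimal set.
The slack constraints stay slack near `(α, β)`, so every nearby point of the affine span is
feasible and, being tight along a perfect matching, optimal.
-/

open Filter Topology

section IntrinsicInterior

variable {E : Type*} [AddCommGroup E] [Module ℝ E] [TopologicalSpace E] {s : Set E} {p q : E}

theorem mem_intrinsicInterior_of_eventually (hp : p ∈ s)
    (h : ∀ᶠ r in 𝓝 p, r ∈ affineSpan ℝ s → r ∈ s) : p ∈ intrinsicInterior ℝ s := by
  let y : affineSpan ℝ s := ⟨p, subset_affineSpan ℝ s hp⟩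
  refine mem_intrinsicInterior.2 ⟨y, mem_interior_iff_mem_nhds.2 ?_, rfl⟩
  exact ((continuous_subtype_val.tendsto y).eventually h).mono fun r hr => hr r.2

variable [IsTopologicalAddGroup E] [ContinuousSMul ℝ E]

theorem exists_pos_add_smul_sub_mem_of_mem_intrinsicInterior_s5 (hp : p ∈ intrinsicInterior ℝ s)
    (hq : q ∈ affineSpan ℝ s) : ∃ t : ℝ, 0 < t ∧ p + t • (p - q) ∈ s := by
  obtain ⟨y, hy, rfl⟩ := mem_intrinsicInterior.1 hp
  let c : ℝ → affineSpan ℝ s := fun t =>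
    ⟨y + t • (y - q), by simpa [add_comm] using (affineSpan ℝ s).smul_vsub_vadd_mem t y.2 hq y.2⟩
  have hc : Tendsto c (𝓝 0) (𝓝 y) := by
    have : Continuous c := by fun_prop
    simpa [c] using this.tendsto 0
  have hev : ∀ᶠ t in 𝓝[>] 0, (c t : E) ∈ s :=
    (hc.eventually (mem_interior_iff_mem_nhds.1 hy)).filter_mono nhdsWithin_le_nhds
  exact (eventually_mem_nhdsWithin.and hev).exists

theorem LinearMap.eq_of_le_of_mem_intrinsicInterior (f : E →ₗ[ℝ] ℝ) {c : ℝ}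
    (hle : ∀ r ∈ s, f r ≤ c) (hp : p ∈ intrinsicInterior ℝ s) (hpc : f p = c) (hq : q ∈ s) :
    f q = c := by
  obtain ⟨t, ht, hmem⟩ :=
    exists_pos_add_smul_sub_mem_of_mem_intrinsicInterior_s5 hp (subset_affineSpan ℝ s hq)
  have hext := hle _ hmem
  simp only [map_add, map_smul, map_sub, hpc, smul_eq_mul] at hext
  nlinarith [hle q hq]

end IntrinsicInterior

section Hall

variable {V L : Type*} [Fintype V] [Fintype L] {E : V → L → Prop} [DecidableRel E]

theorem exists_perfectMatching_of_forall_card_le (hcard : Fintype.card V = Fintype.card L)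
    (h : ∀ S : Finset V, #S ≤ #{ℓ | ∃ v ∈ S, E v ℓ}) : ∃ x : V ≃ L, IsPerfectMatching E x := by
  obtain ⟨f, hinj, hf⟩ := (Fintype.all_card_le_filter_rel_iff_exists_injective E).1 h
  exact ⟨.ofBijective f ((Fintype.bijective_iff_injective_and_card f).2 ⟨hinj, hcard⟩), hf⟩

theorem perfectlyMatchable_of_forall_card_le [DecidableEq L]
    (hcard : Fintype.card V = Fintype.card L) {v₀ : V} {ℓ₀ : L} (hE : E v₀ ℓ₀)
    (h : ∀ S : Finset V, v₀ ∉ S → #S ≤ #{ℓ | ∃ v ∈ S, E v ℓ ∧ ℓ ≠ ℓ₀}) :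
    PerfectlyMatchable E v₀ ℓ₀ := by
  classical
  let E' : {v // v ≠ v₀} → L → Prop := fun v ℓ => E v ℓ ∧ ℓ ≠ ℓ₀
  obtain ⟨f, hinj, hf⟩ := (Fintype.all_card_le_filter_rel_iff_exists_injective E').1 fun A => by
    have := h (A.map (.subtype _)) (by simp)
    simpa [E'] using this
  let g : V → L := fun v => if hv : v = v₀ then ℓ₀ else f ⟨v, hv⟩
  have hg : ∀ v, E v (g v) := fun v => by
    by_cases hv : v = v₀
    · subst hv; simpa [g] using hE
    · simpa [g, hv] using (hf ⟨v, hv⟩).1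
  have hginj : Function.Injective g := by
    intro v w hvw
    by_cases hv : v = v₀ <;> by_cases hw : w = v₀ <;> simp only [g, hv, hw] at hvw
    · rw [hv, hw]
    · exact absurd hvw.symm (hf ⟨w, hw⟩).2
    · exact absurd hvw (hf ⟨v, hv⟩).2
    · simpa using hinj hvw
  refine ⟨.ofBijective g ((Fintype.bijective_iff_injective_and_card g).2 ⟨hginj, hcard⟩), hg, ?_⟩
  simp [g]

end Hall

section LAP

variable {V L : Type*}

def edgeSum (v : V) (ℓ : L) : ((V → ℝ) × (L → ℝ)) →ₗ[ℝ] ℝ :=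
  LinearMap.proj (R := ℝ) (φ := fun _ => ℝ) v ∘ₗ LinearMap.fst ℝ (V → ℝ) (L → ℝ) +
    LinearMap.proj (R := ℝ) (φ := fun _ => ℝ) ℓ ∘ₗ LinearMap.snd ℝ (V → ℝ) (L → ℝ)

@[simp]
theorem edgeSum_apply (v : V) (ℓ : L) (q : (V → ℝ) × (L → ℝ)) : edgeSum v ℓ q = q.1 v + q.2 ℓ :=
  rfl

variable [Fintype V] [Fintype L] {θ : V → L → ℝ} {Lab : V → Finset L}

theorem assignCost_sub_dualObj (q : (V → ℝ) × (L → ℝ)) (x : V ≃ L) :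
    assignCost θ x - dualObj q = ∑ v, (θ v (x v) - (q.1 v + q.2 (x v))) := by
  rw [assignCost, dualObj, ← Equiv.sum_comp x q.2, ← sum_add_distrib, ← sum_sub_distrib]

theorem dualObj_le_assignCost {q : (V → ℝ) × (L → ℝ)} {x : V ≃ L}
    (hq : DualFeasible θ Lab q) (hx : FeasibleAssignment Lab x) : dualObj q ≤ assignCost θ x := by
  have hgap : 0 ≤ assignCost θ x - dualObj q := assignCost_sub_dualObj (θ := θ) q x ▸
    sum_nonneg fun v _ => sub_nonneg.2 (hq v (x v) (hx v))
  linarith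

theorem dualObj_eq_assignCost_of_tight {q : (V → ℝ) × (L → ℝ)} {x : V ≃ L}
    (htight : ∀ v, q.1 v + q.2 (x v) = θ v (x v)) : dualObj q = assignCost θ x := by
  have hgap := assignCost_sub_dualObj (θ := θ) q x
  simp only [htight, sub_self, sum_const_zero] at hgap
  linarith

theorem mem_dualOpt_of_tight {q : (V → ℝ) × (L → ℝ)} {x : V ≃ L} (hq : DualFeasible θ Lab q)
    (hx : FeasibleAssignment Lab x) (htight : ∀ v, q.1 v + q.2 (x v) = θ v (x v)) :
    q ∈ DualOpt θ Lab :=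
  ⟨hq, fun _ hr =>
    (dualObj_le_assignCost hr hx).trans_eq (dualObj_eq_assignCost_of_tight htight).symm⟩

theorem tight_of_assignCost_le_dualObj {q : (V → ℝ) × (L → ℝ)} {x : V ≃ L}
    (hq : DualFeasible θ Lab q) (hx : FeasibleAssignment Lab x)
    (hle : assignCost θ x ≤ dualObj q) (v : V) : q.1 v + q.2 (x v) = θ v (x v) := by
  have hslack : ∀ u ∈ univ, 0 ≤ θ u (x u) - (q.1 u + q.2 (x u)) :=
    fun u _ => sub_nonneg.2 (hq u (x u) (hx u))
  have hsum : ∑ u, (θ u (x u) - (q.1 u + q.2 (x u))) = 0 :=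
    le_antisymm (assignCost_sub_dualObj (θ := θ) q x ▸ sub_nonpos.2 hle) (sum_nonneg hslack)
  linarith [(sum_eq_zero_iff_of_nonneg hslack).1 hsum v (mem_univ v)]

theorem eventually_forall_add_lt (p : (V → ℝ) × (L → ℝ)) :
    ∀ᶠ q in 𝓝 p, ∀ v ℓ, p.1 v + p.2 ℓ < θ v ℓ → q.1 v + q.2 ℓ < θ v ℓ := by
  refine eventually_all.2 fun v => eventually_all.2 fun ℓ => ?_
  by_cases h : p.1 v + p.2 ℓ < θ v ℓ
  · have hcont : Continuous fun q : (V → ℝ) × (L → ℝ) => q.1 v + q.2 ℓ := by fun_prop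
    exact (hcont.continuousAt.eventually_lt continuousAt_const h).mono fun q hq _ => hq
  · exact .of_forall fun q h' => absurd h' h

variable {α : V → ℝ} {β : L → ℝ}

theorem eq_of_mem_affineSpan_dualOpt
    (hpm : ∀ v ℓ, EqEdge θ Lab α β v ℓ → PerfectlyMatchable (EqEdge θ Lab α β) v ℓ)
    (hopt : (α, β) ∈ DualOpt θ Lab) {v : V} {ℓ : L} (he : EqEdge θ Lab α β v ℓ)
    {q : (V → ℝ) × (L → ℝ)} (hq : q ∈ affineSpan ℝ (DualOpt θ Lab)) : q.1 v + q.2 ℓ = θ v ℓ := by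
  obtain ⟨y, hy, rfl⟩ := hpm v ℓ he
  have hcost : dualObj (α, β) = assignCost θ y := dualObj_eq_assignCost_of_tight fun u => (hy u).2
  have htight : ∀ r ∈ DualOpt θ Lab, edgeSum v (y v) r = θ v (y v) := fun r hr => by
    simpa using tight_of_assignCost_le_dualObj hr.1 (fun u => (hy u).1)
      (hcost ▸ hr.2 _ hopt.1) v
  simpa using AffineMap.eqOn_affineSpan (f := (edgeSum v (y v)).toAffineMap)
    (g := AffineMap.const ℝ _ (θ v (y v))) htight hq

theorem mem_intrinsicInterior_of_forall_perfectlyMatchable (hαβ : DualFeasible θ Lab (α, β))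
    {x : V ≃ L} (hx : IsPerfectMatching (EqEdge θ Lab α β) x)
    (hpm : ∀ v ℓ, EqEdge θ Lab α β v ℓ → PerfectlyMatchable (EqEdge θ Lab α β) v ℓ) :
    (α, β) ∈ intrinsicInterior ℝ (DualOpt θ Lab) := by
  have hopt := mem_dualOpt_of_tight hαβ (fun v => (hx v).1) fun v => (hx v).2
  refine mem_intrinsicInterior_of_eventually hopt
    ((eventually_forall_add_lt (θ := θ) (α, β)).mono fun q hslack hq => ?_)
  have htight : ∀ v ℓ, EqEdge θ Lab α β v ℓ → q.1 v + q.2 ℓ = θ v ℓ :=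
    fun v ℓ he => eq_of_mem_affineSpan_dualOpt hpm hopt he hq
  refine mem_dualOpt_of_tight (x := x) (fun v ℓ hℓ => ?_) (fun v => (hx v).1)
    fun v => htight v _ (hx v)
  rcases (hαβ v ℓ hℓ).lt_or_eq with hlt | heq
  · exact (hslack v ℓ hlt).le
  · exact (htight v ℓ ⟨hℓ, heq⟩).le

variable [DecidableEq V] [DecidableEq L]

def shiftDir (S : Finset V) (T : Finset L) : (V → ℝ) × (L → ℝ) :=
  (fun v => if v ∈ S then 1 else 0, fun ℓ => if ℓ ∈ T then -1 else 0)

theorem dualObj_add_smul_shiftDir (p : (V → ℝ) × (L → ℝ)) (ε : ℝ) (S : Finset V) (T : Finset L) :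
    dualObj (p + ε • shiftDir S T) = dualObj p + ε * (#S - #T) := by
  simp only [dualObj, shiftDir, Prod.fst_add, Prod.snd_add, Prod.smul_fst, Prod.smul_snd,
    Pi.add_apply, Pi.smul_apply, smul_eq_mul, sum_add_distrib, ← mul_sum, sum_ite_mem,
    univ_inter, sum_const, nsmul_eq_mul, mul_one, mul_neg]
  ring

theorem exists_pos_dualFeasible_add_smul_shiftDir
    (hαβ : DualFeasible θ Lab (α, β)) {S : Finset V} {T : Finset L}
    (hST : ∀ v ∈ S, ∀ ℓ, EqEdge θ Lab α β v ℓ → ℓ ∈ T) :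
    ∃ ε : ℝ, 0 < ε ∧ DualFeasible θ Lab ((α, β) + ε • shiftDir S T) := by
  have hlim : Tendsto (fun ε : ℝ => (α, β) + ε • shiftDir S T) (𝓝[>] 0) (𝓝 (α, β)) := by
    have : Continuous fun ε : ℝ => (α, β) + ε • shiftDir S T := by fun_prop
    simpa using (this.tendsto 0).mono_left nhdsWithin_le_nhds
  obtain ⟨ε, hε, hslack⟩ :=
    (eventually_mem_nhdsWithin.and (hlim.eventually (eventually_forall_add_lt (θ := θ) _))).exists
  refine ⟨ε, hε, fun v ℓ hℓ => ?_⟩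
  rcases (hαβ v ℓ hℓ).lt_or_eq with hlt | heq
  · exact (hslack v ℓ hlt).le
  · have hdir : (shiftDir S T).1 v + (shiftDir S T).2 ℓ ≤ 0 := by
      by_cases hv : v ∈ S
      · simp [shiftDir, hv, hST v hv ℓ ⟨hℓ, heq⟩]
      · by_cases hℓT : ℓ ∈ T <;> simp [shiftDir, hv, hℓT]
    have hmove := mul_nonpos_of_nonneg_of_nonpos (le_of_lt hε) hdir
    simp only [Prod.fst_add, Prod.snd_add, Prod.smul_fst, Prod.smul_snd, Pi.add_apply,
      Pi.smul_apply, smul_eq_mul] at heq ⊢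
    linarith

open Classical in
theorem card_le_card_eqEdge_of_mem_dualOpt (hopt : (α, β) ∈ DualOpt θ Lab) (S : Finset V) :
    #S ≤ #{ℓ | ∃ v ∈ S, EqEdge θ Lab α β v ℓ} := by
  by_contra! hlt
  obtain ⟨ε, hε, hfeas⟩ := exists_pos_dualFeasible_add_smul_shiftDir hopt.1 (S := S)
    (T := {ℓ | ∃ v ∈ S, EqEdge θ Lab α β v ℓ}) fun v hv ℓ he => by simpa using ⟨v, hv, he⟩
  have hgain : (0 : ℝ) < ε * (#S - #{ℓ | ∃ v ∈ S, EqEdge θ Lab α β v ℓ}) :=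
    mul_pos hε (sub_pos.2 (by exact_mod_cast hlt))
  have hle := hopt.2 _ hfeas
  rw [dualObj_add_smul_shiftDir] at hle
  linarith

theorem exists_perfectMatching_of_mem_dualOpt (hcard : Fintype.card V = Fintype.card L)
    (hopt : (α, β) ∈ DualOpt θ Lab) : ∃ x : V ≃ L, IsPerfectMatching (EqEdge θ Lab α β) x := by
  classical
  exact exists_perfectMatching_of_forall_card_le hcard (card_le_card_eqEdge_of_mem_dualOpt hopt)

theorem exists_mem_dualOpt_lt_of_not_perfectlyMatchable (hcard : Fintype.card V = Fintype.card L)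
    (hopt : (α, β) ∈ DualOpt θ Lab) {v₀ : V} {ℓ₀ : L} (he : EqEdge θ Lab α β v₀ ℓ₀)
    (hnot : ¬ PerfectlyMatchable (EqEdge θ Lab α β) v₀ ℓ₀) :
    ∃ q ∈ DualOpt θ Lab, q.1 v₀ + q.2 ℓ₀ < θ v₀ ℓ₀ := by
  classical
  obtain ⟨S, hv₀S, hdef⟩ : ∃ S : Finset V, v₀ ∉ S ∧
      #{ℓ | ∃ v ∈ S, EqEdge θ Lab α β v ℓ ∧ ℓ ≠ ℓ₀} < #S := by
    by_contra! h
    exact hnot (perfectlyMatchable_of_forall_card_le hcard he h)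
  set T : Finset L := {ℓ | ∃ v ∈ S, EqEdge θ Lab α β v ℓ}
  have hT : T ⊆ insert ℓ₀ ({ℓ | ∃ v ∈ S, EqEdge θ Lab α β v ℓ ∧ ℓ ≠ ℓ₀} : Finset L) := by
    intro ℓ hℓ
    by_cases h : ℓ = ℓ₀ <;> simp_all [T]
  have hHall : #S ≤ #T := card_le_card_eqEdge_of_mem_dualOpt hopt S
  have hℓ₀T : ℓ₀ ∈ T := by
    by_contra h
    have hle := card_le_card ((subset_insert_iff_of_notMem h).1 hT)
    omega
  have hcardT : #T = #S := by
    have := (card_le_card hT).trans (card_insert_le _ _)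
    omega
  obtain ⟨ε, hε, hfeas⟩ := exists_pos_dualFeasible_add_smul_shiftDir hopt.1 (S := S) (T := T)
    fun v hv ℓ he => by simpa [T] using ⟨v, hv, he⟩
  refine ⟨_, ⟨hfeas, fun r hr => ?_⟩, ?_⟩
  · rw [dualObj_add_smul_shiftDir, hcardT, sub_self, mul_zero, add_zero]
    exact hopt.2 r hr
  · simp only [shiftDir, Prod.smul_mk, Prod.mk_add_mk, Pi.add_apply, Pi.smul_apply, hv₀S,
      if_false, if_true, hℓ₀T, smul_eq_mul, mul_zero, add_zero, mul_neg, mul_one]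
    linarith [he.2]

theorem perfectlyMatchable_of_mem_intrinsicInterior (hcard : Fintype.card V = Fintype.card L)
    (hri : (α, β) ∈ intrinsicInterior ℝ (DualOpt θ Lab)) {v : V} {ℓ : L}
    (he : EqEdge θ Lab α β v ℓ) : PerfectlyMatchable (EqEdge θ Lab α β) v ℓ := by
  by_contra hnot
  obtain ⟨q, hq, hlt⟩ :=
    exists_mem_dualOpt_lt_of_not_perfectlyMatchable hcard (intrinsicInterior_subset hri) he hnot
  have htight := (edgeSum v ℓ).eq_of_le_of_mem_intrinsicInterior
    (fun r hr => by simpa using hr.1 v ℓ he.1) hri (by simpa using he.2) hq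
  simp only [edgeSum_apply] at htight
  linarith

end LAP

/-- Theorem 2(b): a dual-feasible `(α, β)` lies in the relative interior of the dual
optimal set iff the equality subgraph has a perfect matching and each of its edges is
perfectly matchable. -/
theorem statement5 {V L : Type*} [Fintype V] [Fintype L] [DecidableEq V] [DecidableEq L]
    (θ : V → L → ℝ) (Lab : V → Finset L)
    (hfeas : ∃ x : V ≃ L, FeasibleAssignment Lab x)
    (α : V → ℝ) (β : L → ℝ) (hαβ : DualFeasible θ Lab (α, β)) :
    (α, β) ∈ intrinsicInterior ℝ (DualOpt θ Lab) ↔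
      ((∃ x : V ≃ L, IsPerfectMatching (EqEdge θ Lab α β) x) ∧
        ∀ v ℓ, EqEdge θ Lab α β v ℓ → PerfectlyMatchable (EqEdge θ Lab α β) v ℓ) := by
  obtain ⟨x, -⟩ := hfeas
  have hcard : Fintype.card V = Fintype.card L := Fintype.card_congr x
  constructor
  · intro hri
    exact ⟨exists_perfectMatching_of_mem_dualOpt hcard (intrinsicInterior_subset hri),
      fun v ℓ => perfectlyMatchable_of_mem_intrinsicInterior hcard hri⟩
  · rintro ⟨⟨x, hx⟩, hpm⟩
    exact mem_intrinsicInterior_of_forall_perfectlyMatchable hαβ hx hpm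
end

section
/- Let (α, β) be feasible for the dual LP of the LAP and let x be a perfect matching in the equality subgraph (V ∪ L, E(α,β)). If every directed edge of F_x(E(α,β)) belongs to a directed cycle of the directed graph (V, F_x(E(α,β))), then (α, β) lies in the relative interior of the set of optimal solutions of the dual LP. -/
open Finset

/-! If an edge `{v, ℓ}` of the equality subgraph is not matched by `x`, the edge
`(v, x⁻¹ ℓ)` of `F_x` lies on a directed cycle, and rotating `x` along that cycle gives a
perfect matching of the equality subgraph through `{v, ℓ}`. Every perfect matching of the
equality subgraph is an optimal assignment, so by complementary slackness every optimal dual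
solution is tight on every edge of `E(α, β)`: the optimal set lies in the affine subspace `A`
cut out by these equalities. Conversely the constraints outside `E(α, β)` hold strictly at
`(α, β)`, hence on a neighbourhood of it, and the points of `A` in that neighbourhood are
optimal, being tight on the perfect matching `x`. -/

namespace List

variable {α : Type*} [DecidableEq α] {r : α → α → Prop} {l : List α}

theorem rel_next_of_isChain (hl : l.Nodup) (hne : l ≠ []) (hc : l.IsChain r)
    (hlast : r (l.getLast hne) (l.head hne)) {u : α} (hu : u ∈ l) : r u (l.next u hu) := by
  by_cases hu' : u ∈ l.dropLast
  · exact isChain_pair.mp (hc.infix (nextOr_infix_of_mem_dropLast hu' _))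
  · obtain rfl : u = l.getLast hne :=
      not_imp_comm.mp (mem_dropLast_of_mem_of_ne_getLast hu) hu'
    rwa [next_getLast_eq_head l hne hl]

theorem rel_formPerm_apply_of_isChain (hl : l.Nodup) (hne : l ≠ []) (hc : l.IsChain r)
    (hlast : r (l.getLast hne) (l.head hne)) {u : α} (hu : u ∈ l) : r u (l.formPerm u) := by
  rw [formPerm_apply_mem_eq_next hl u hu]
  exact rel_next_of_isChain hl hne hc hlast hu

end List

theorem mem_intrinsicInterior_of_isOpen_inter_subset {𝕜 V P : Type*} [Ring 𝕜] [AddCommGroup V]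
    [Module 𝕜 V] [TopologicalSpace P] [AddTorsor V P] {s U : Set P} {A : AffineSubspace 𝕜 P}
    {x : P} (hx : x ∈ s) (hsA : s ⊆ A) (hU : IsOpen U) (hxU : x ∈ U) (hUA : U ∩ A ⊆ s) :
    x ∈ intrinsicInterior 𝕜 s := by
  have hspan : affineSpan 𝕜 s ≤ A := affineSpan_le.mpr hsA
  refine ⟨⟨x, subset_affineSpan 𝕜 s hx⟩, ?_, rfl⟩
  refine interior_maximal ?_ (hU.preimage continuous_subtype_val) hxU
  rintro ⟨p, hp⟩ hpU
  exact hUA ⟨hpU, hspan hp⟩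

section Matching

variable {V L : Type*} {E : V → L → Prop} {x : V ≃ L}

theorem IsPerfectMatching.perfectlyMatchable_of_edgeOnDirectedCycle [DecidableEq V]
    (hx : IsPerfectMatching E x)
    (hcyc : ∀ a b, Fdir E x a b → EdgeOnDirectedCycle (Fdir E x) a b)
    {v : V} {ℓ : L} (h : E v ℓ) : PerfectlyMatchable E v ℓ := by
  obtain hvℓ | hvℓ := eq_or_ne (x v) ℓ
  · exact ⟨x, hx, hvℓ⟩
  set b := x.symm ℓ
  have hvb : Fdir E x v b := ⟨fun hvb => hvℓ (by simp [hvb, b]), by simpa [b] using h⟩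
  obtain ⟨l, hnd, hch, hlast⟩ := hcyc v b hvb
  refine ⟨(v :: b :: l).formPerm.trans x, fun u => ?_, ?_⟩
  by_cases hu : u ∈ v :: b :: l
  · exact (List.rel_formPerm_apply_of_isChain hnd (List.cons_ne_nil _ _) hch
      (by simpa using hlast) hu).2
  · rw [Equiv.trans_apply, List.formPerm_apply_of_notMem hu]
    exact hx u
  · rw [Equiv.trans_apply, List.formPerm_apply_head _ _ _ hnd, Equiv.apply_symm_apply]

end Matching

section Duality

variable {V L : Type*}

def tightSubspace (θ : V → L → ℝ) (E : V → L → Prop) : AffineSubspace ℝ ((V → ℝ) × (L → ℝ)) where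
  carrier := {p | ∀ v ℓ, E v ℓ → p.1 v + p.2 ℓ = θ v ℓ}
  smul_vsub_vadd_mem' c p q r hp hq hr v ℓ he := by
    simp only [vsub_eq_sub, vadd_eq_add, Prod.smul_fst, Prod.smul_snd, Prod.fst_add,
      Prod.snd_add, Prod.fst_sub, Prod.snd_sub, Pi.add_apply, Pi.sub_apply, Pi.smul_apply,
      smul_eq_mul]
    linear_combination c * hp v ℓ he - c * hq v ℓ he + hr v ℓ he

theorem isOpen_setOf_forall_lt_off [Finite V] [Finite L] (θ : V → L → ℝ) (Lab : V → Finset L)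
    (E : V → L → Prop) :
    IsOpen {p : (V → ℝ) × (L → ℝ) | ∀ v ℓ, ℓ ∈ Lab v → ¬ E v ℓ → p.1 v + p.2 ℓ < θ v ℓ} := by
  simp only [Set.ofPred_forall]
  exact isOpen_iInter_of_finite fun v => isOpen_iInter_of_finite fun ℓ =>
    isOpen_iInter_of_finite fun _ => isOpen_iInter_of_finite fun _ =>
      isOpen_lt (by fun_prop) continuous_const

variable [Fintype V] [Fintype L] {θ : V → L → ℝ} {Lab : V → Finset L}
  {p : (V → ℝ) × (L → ℝ)} {y : V ≃ L}

theorem dualObj_eq_sum_add (p : (V → ℝ) × (L → ℝ)) (y : V ≃ L) :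
    dualObj p = ∑ v, (p.1 v + p.2 (y v)) := by
  rw [dualObj, Finset.sum_add_distrib, Equiv.sum_comp y p.2]

theorem dualObj_eq_assignCost (h : ∀ v, p.1 v + p.2 (y v) = θ v (y v)) :
    dualObj p = assignCost θ y :=
  (dualObj_eq_sum_add p y).trans (Finset.sum_congr rfl fun v _ => h v)

theorem DualFeasible.dualObj_le_assignCost (hp : DualFeasible θ Lab p)
    (hy : FeasibleAssignment Lab y) : dualObj p ≤ assignCost θ y :=
  (dualObj_eq_sum_add p y).trans_le (Finset.sum_le_sum fun v _ => hp v (y v) (hy v))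

theorem DualFeasible.mem_dualOpt (hp : DualFeasible θ Lab p) (hy : FeasibleAssignment Lab y)
    (h : ∀ v, p.1 v + p.2 (y v) = θ v (y v)) : p ∈ DualOpt θ Lab :=
  ⟨hp, fun _ hq => (hq.dualObj_le_assignCost hy).trans_eq (dualObj_eq_assignCost h).symm⟩

theorem DualFeasible.tight_of_dualObj_eq_assignCost (hp : DualFeasible θ Lab p)
    (hy : FeasibleAssignment Lab y) (h : dualObj p = assignCost θ y) (v : V) :
    p.1 v + p.2 (y v) = θ v (y v) := by
  rw [dualObj_eq_sum_add p y] at h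
  exact (Finset.sum_eq_sum_iff_of_le fun u _ => hp u (y u) (hy u)).1 h v (Finset.mem_univ v)

theorem dualOpt_subset_tightSubspace {α : V → ℝ} {β : L → ℝ} (hopt : (α, β) ∈ DualOpt θ Lab)
    (hmatch : ∀ v ℓ, EqEdge θ Lab α β v ℓ → PerfectlyMatchable (EqEdge θ Lab α β) v ℓ) :
    DualOpt θ Lab ⊆ tightSubspace θ (EqEdge θ Lab α β) := by
  intro p hp v ℓ he
  obtain ⟨y, hy, rfl⟩ := hmatch v ℓ he
  refine hp.1.tight_of_dualObj_eq_assignCost (fun u => (hy u).1) ?_ v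
  calc dualObj p = dualObj (α, β) := le_antisymm (hopt.2 p hp.1) (hp.2 _ hopt.1)
    _ = assignCost θ y := dualObj_eq_assignCost fun u => (hy u).2

end Duality

theorem statement8_general {V L : Type*} [Fintype V] [Fintype L] [DecidableEq V]
    (θ : V → L → ℝ) (Lab : V → Finset L)
    (α : V → ℝ) (β : L → ℝ) (hαβ : DualFeasible θ Lab (α, β))
    (x : V ≃ L) (hx : IsPerfectMatching (EqEdge θ Lab α β) x)
    (hcyc : ∀ a b, Fdir (EqEdge θ Lab α β) x a b →
      EdgeOnDirectedCycle (Fdir (EqEdge θ Lab α β) x) a b) :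
    (α, β) ∈ intrinsicInterior ℝ (DualOpt θ Lab) := by
  set E := EqEdge θ Lab α β
  have hxLab : FeasibleAssignment Lab x := fun v => (hx v).1
  have hopt : (α, β) ∈ DualOpt θ Lab := hαβ.mem_dualOpt hxLab fun v => (hx v).2
  refine mem_intrinsicInterior_of_isOpen_inter_subset hopt
    (dualOpt_subset_tightSubspace hopt fun _ _ h =>
      hx.perfectlyMatchable_of_edgeOnDirectedCycle hcyc h)
    (isOpen_setOf_forall_lt_off θ Lab E) ?_ ?_
  · exact fun v ℓ hℓ hE => (hαβ v ℓ hℓ).lt_of_ne fun h => hE ⟨hℓ, h⟩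
  · rintro p ⟨hslack, htight⟩
    refine DualFeasible.mem_dualOpt (fun v ℓ hℓ => ?_) hxLab fun v => htight v _ (hx v)
    by_cases hE : E v ℓ
    · exact (htight v ℓ hE).le
    · exact (hslack v ℓ hℓ hE).le

/-- If `(α, β)` is dual feasible, `x` is a perfect matching of the equality subgraph and
every directed edge of `F_x(E(α,β))` lies on a directed cycle, then `(α, β)` lies in the
relative interior of the dual optimal set. -/
theorem statement8 {V L : Type*} [Fintype V] [Fintype L] [DecidableEq V] [DecidableEq L]
    (θ : V → L → ℝ) (Lab : V → Finset L)
    (α : V → ℝ) (β : L → ℝ) (hαβ : DualFeasible θ Lab (α, β))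
    (x : V ≃ L) (hx : IsPerfectMatching (EqEdge θ Lab α β) x)
    (hcyc : ∀ a b, Fdir (EqEdge θ Lab α β) x a b →
      EdgeOnDirectedCycle (Fdir (EqEdge θ Lab α β) x) a b) :
    (α, β) ∈ intrinsicInterior ℝ (DualOpt θ Lab) :=
  statement8_general θ Lab α β hαβ x hx hcyc
end
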